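/- arXiv:2303.04195 — 2 statements merged into one kernel-verified Lean document; each statement's English description precedes it below -/
import Mathlib

section
/- Let K ⊆ ℝ^d be a nonempty closed convex set containing the origin and symmetric about the origin, let g ∈ K, and let g̃ = g + w. If ĝ is the Euclidean projection of g̃ onto K, then ‖ĝ − g‖₂² ≤ 4·sup_{x ∈ K} ⟨x, w⟩. -/
set_option maxHeartbeats 1000000


theorem stmt_3 {d : ℕ} (K : Set (EuclideanSpace ℝ (Fin d)))
    (hKne : (0 : EuclideanSpace ℝ (Fin d)) ∈ K) (hKc : IsClosed K)
    (hKconv : Convex ℝ K) (hKsym : ∀ x ∈ K, -x ∈ K)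
    (g w ghat : EuclideanSpace ℝ (Fin d)) (hg : g ∈ K)
    (hghat : ghat ∈ K)
    (hproj : ∀ g' ∈ K, ‖(g + w) - ghat‖ ≤ ‖(g + w) - g'‖)
    (hbdd : BddAbove ((fun x => inner ℝ x w : EuclideanSpace ℝ (Fin d) → ℝ) '' K)) :
    ‖ghat - g‖ ^ 2 ≤
      4 * sSup ((fun x => inner ℝ x w : EuclideanSpace ℝ (Fin d) → ℝ) '' K) := by
  set S := sSup ((fun x => inner ℝ x w : EuclideanSpace ℝ (Fin d) → ℝ) '' K) with hS
  have hiInf : ‖(g + w) - ghat‖ = ⨅ x : K, ‖(g + w) - x‖ := by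
    haveI : Nonempty K := ⟨⟨ghat, hghat⟩⟩
    apply le_antisymm
    · exact le_ciInf fun x => hproj x x.2
    · have hb : BddBelow (Set.range fun x : K => ‖(g + w) - (x : EuclideanSpace ℝ (Fin d))‖) := by
        refine ⟨0, ?_⟩
        rintro r ⟨x, rfl⟩
        exact norm_nonneg _
      exact ciInf_le hb ⟨ghat, hghat⟩
  have hvar := (norm_eq_iInf_iff_real_inner_le_zero hKconv hghat).mp hiInf g hg
  have hkey : ‖ghat - g‖ ^ 2 ≤ inner ℝ (ghat - g) w := by
    have : inner ℝ ((g + w) - ghat) (g - ghat) =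
        ‖ghat - g‖ ^ 2 - inner ℝ (ghat - g) w := by
      have h1 : (g + w) - ghat = -(ghat - g) + w := by abel
      have h2 : g - ghat = -(ghat - g) := by abel
      rw [h1, h2, inner_add_left, inner_neg_neg, inner_neg_right,
        real_inner_self_eq_norm_sq, real_inner_comm]
      ring
    linarith [hvar, this ▸ hvar]
  have hmem : ∀ x ∈ K, (inner ℝ x w : ℝ) ≤ S :=
    fun x hx => le_csSup hbdd ⟨x, hx, rfl⟩
  have h1 : (inner ℝ ghat w : ℝ) ≤ S := hmem ghat hghat
  have h2 : (inner ℝ (-g) w : ℝ) ≤ S := hmem (-g) (hKsym g hg)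
  have hS0 : (0 : ℝ) ≤ S := by
    have := hmem 0 hKne
    simpa using this
  have : (inner ℝ (ghat - g) w : ℝ) = inner ℝ ghat w + inner ℝ (-g) w := by
    rw [sub_eq_add_neg, inner_add_left]
  linarith [hkey]
end

section
/- Let Σ, Σ_s ∈ ℝ^{d×d} be symmetric positive definite with Σ = (1/n)XᵀX + λI and ‖I − Σ^{−1/2} Σ_s Σ^{−1/2}‖₂ ≤ δ for some 0 ≤ δ < 1. Then ‖(Σ_s⁻¹ − Σ⁻¹) Σ (Σ_s⁻¹ − Σ⁻¹)‖₂ ≤ ‖Σ_s⁻¹ Σ^{1/2}‖₂² · δ². -/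
open Matrix

namespace Matrix.PosSemidef

/-- The positive semidefinite square root, as `Matrix.PosSemidef.sqrt` was defined in Mathlib
(December 2024); that declaration has since been removed. -/
noncomputable def sqrt {n 𝕜 : Type*} [Fintype n] [DecidableEq n] [RCLike 𝕜] [PartialOrder 𝕜]
    {A : Matrix n n 𝕜} (hA : A.PosSemidef) : Matrix n n 𝕜 :=
  hA.1.eigenvectorUnitary.1 * diagonal ((↑) ∘ (√·) ∘ hA.1.eigenvalues) *
    (star hA.1.eigenvectorUnitary : Matrix n n 𝕜)

end Matrix.PosSemidef

theorem stmt12_sqrt_mul_self {d : ℕ} {S : Matrix (Fin d) (Fin d) ℝ} (hS : S.PosSemidef) :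
    hS.sqrt * hS.sqrt = S := by
  have hU : (star hS.1.eigenvectorUnitary : Matrix (Fin d) (Fin d) ℝ) *
      hS.1.eigenvectorUnitary.1 = 1 := Unitary.star_mul_self_of_mem hS.1.eigenvectorUnitary.2
  have hD : diagonal ((↑) ∘ (√·) ∘ hS.1.eigenvalues) * diagonal ((↑) ∘ (√·) ∘ hS.1.eigenvalues)
      = diagonal (RCLike.ofReal ∘ hS.1.eigenvalues : Fin d → ℝ) := by
    rw [diagonal_mul_diagonal]
    congr 1; funext i
    simp [Real.mul_self_sqrt (hS.eigenvalues_nonneg i)]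
  conv_rhs => rw [hS.1.spectral_theorem]
  rw [Unitary.conjStarAlgAut_apply]
  unfold Matrix.PosSemidef.sqrt
  calc _ = hS.1.eigenvectorUnitary.1 * diagonal ((↑) ∘ (√·) ∘ hS.1.eigenvalues) *
      ((star hS.1.eigenvectorUnitary : Matrix (Fin d) (Fin d) ℝ) * hS.1.eigenvectorUnitary.1) *
      diagonal ((↑) ∘ (√·) ∘ hS.1.eigenvalues) *
      (star hS.1.eigenvectorUnitary : Matrix (Fin d) (Fin d) ℝ) := by simp only [mul_assoc]; rfl
    _ = _ := by rw [hU, mul_one, mul_assoc _ (diagonal _) (diagonal _), hD]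

theorem stmt12_sqrt_herm {d : ℕ} {S : Matrix (Fin d) (Fin d) ℝ} (hS : S.PosSemidef) :
    hS.sqrtᴴ = hS.sqrt := by
  unfold Matrix.PosSemidef.sqrt
  rw [conjTranspose_mul, conjTranspose_mul, diagonal_conjTranspose, ← star_eq_conjTranspose,
    ← star_eq_conjTranspose, star_star, star_trivial, mul_assoc]

theorem stmt_12 {d n : ℕ} (S Ss : Matrix (Fin d) (Fin d) ℝ)
    (hS : S.PosDef) (hSs : Ss.PosDef)
    (X : Matrix (Fin n) (Fin d) ℝ) (lam : ℝ)
    (hform : S = (1 / (n : ℝ)) • (Xᵀ * X) + lam • (1 : Matrix (Fin d) (Fin d) ℝ))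
    (δ : ℝ) (hδ0 : 0 ≤ δ) (hδ1 : δ < 1)
    (hdev : ‖Matrix.toEuclideanCLM (𝕜 := ℝ) (n := Fin d)
        (1 - hS.posSemidef.sqrt⁻¹ * Ss * hS.posSemidef.sqrt⁻¹)‖ ≤ δ) :
    ‖Matrix.toEuclideanCLM (𝕜 := ℝ) (n := Fin d) ((Ss⁻¹ - S⁻¹) * S * (Ss⁻¹ - S⁻¹))‖ ≤
      ‖Matrix.toEuclideanCLM (𝕜 := ℝ) (n := Fin d) (Ss⁻¹ * hS.posSemidef.sqrt)‖ ^ 2 * δ ^ 2 := by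
  set sq := hS.posSemidef.sqrt with hsqdef
  have hsq2 : sq * sq = S := stmt12_sqrt_mul_self hS.posSemidef
  have hsqH : sqᴴ = sq := stmt12_sqrt_herm hS.posSemidef
  -- invertibility of sq
  have hSdet : IsUnit S.det := isUnit_iff_ne_zero.mpr hS.det_pos.ne'
  have hsqdet : IsUnit sq.det := by
    have : sq.det * sq.det = S.det := by rw [← det_mul, hsq2]
    exact isUnit_of_mul_isUnit_left (this ▸ hSdet)
  have hsql : sq⁻¹ * sq = 1 := nonsing_inv_mul sq hsqdet
  have hsqr : sq * sq⁻¹ = 1 := mul_nonsing_inv sq hsqdet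
  have hSsl : Ss⁻¹ * Ss = 1 := nonsing_inv_mul Ss (isUnit_iff_ne_zero.mpr hSs.det_pos.ne')
  have hSinv : S⁻¹ = sq⁻¹ * sq⁻¹ := by
    apply inv_eq_right_inv
    rw [← hsq2]
    calc sq * sq * (sq⁻¹ * sq⁻¹) = sq * (sq * sq⁻¹) * sq⁻¹ := by noncomm_ring
    _ = 1 := by rw [hsqr, mul_one, hsqr]
  set A := Ss⁻¹ * sq with hA
  set D := (1 : Matrix (Fin d) (Fin d) ℝ) - sq⁻¹ * Ss * sq⁻¹ with hD
  set B := (Ss⁻¹ - S⁻¹) * sq with hB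
  have hBAD : B = A * D := by
    rw [hB, hA, hD, hSinv]
    rw [mul_sub, mul_one]
    have : Ss⁻¹ * sq * (sq⁻¹ * Ss * sq⁻¹) = Ss⁻¹ * (sq * sq⁻¹) * Ss * sq⁻¹ := by
      noncomm_ring
    rw [this, hsqr, mul_one, hSsl, one_mul]
    have h2 : sq⁻¹ * sq⁻¹ * sq = sq⁻¹ := by rw [mul_assoc, hsql, mul_one]
    rw [sub_mul, h2]
  have hstarB : star B = sq * (Ss⁻¹ - S⁻¹) := by
    have h1 : (Ss⁻¹ - S⁻¹)ᴴ = Ss⁻¹ - S⁻¹ := by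
      rw [conjTranspose_sub, hSs.1.inv, hS.1.inv]
    show Bᴴ = _
    rw [hB, conjTranspose_mul, hsqH, h1]
  have hM : (Ss⁻¹ - S⁻¹) * S * (Ss⁻¹ - S⁻¹) = B * star B := by
    rw [hstarB, hB, ← hsq2]; noncomm_ring
  set f := Matrix.toEuclideanCLM (𝕜 := ℝ) (n := Fin d) with hf
  have key : ‖f ((Ss⁻¹ - S⁻¹) * S * (Ss⁻¹ - S⁻¹))‖ = ‖f B‖ * ‖f B‖ := by
    rw [hM, _root_.map_mul, map_star, ← CStarRing.norm_self_mul_star]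
  rw [key]
  have hfB : ‖f B‖ ≤ ‖f A‖ * δ := by
    rw [hBAD, _root_.map_mul]
    calc ‖f A * f D‖ ≤ ‖f A‖ * ‖f D‖ := norm_mul_le _ _
    _ ≤ ‖f A‖ * δ := by
        exact mul_le_mul_of_nonneg_left hdev (norm_nonneg _)
  calc ‖f B‖ * ‖f B‖ ≤ (‖f A‖ * δ) * (‖f A‖ * δ) :=
        mul_le_mul hfB hfB (norm_nonneg _) (le_trans (norm_nonneg _) hfB)
  _ = ‖f A‖ ^ 2 * δ ^ 2 := by ring
end
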